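/- The interpretation of composition of sum-over-paths morphisms is the composition of interpretations: given f represented by s_f ∑_{y⃗_f} e^{2iπ P_f} |O⃗_f⟩⟨I⃗_f| and g by s_g ∑_{y⃗_g} e^{2iπ P_g} |O⃗_g⟩⟨I⃗_g| with O⃗_g and I⃗_f of the same length n, the linear map (s_f s_g / 2^n) ∑_{y⃗_f, y⃗_g, y⃗ ∈ {0,1}^n} e^{2iπ(P_g + P_f + (O⃗_g·y⃗ + I⃗_f·y⃗)/2)} |O⃗_f⟩⟨I⃗_g| equals the matrix product (∑ e^{2iπP_f}|O⃗_f⟩⟨I⃗_f|)·(∑ e^{2iπP_g}|O⃗_g⟩⟨I⃗_g|) scaled by s_f s_g. -/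

import Mathlib

/-!
Since `e^{iπk} = (-1)^k`, the sum over `y⃗ ∈ {0,1}^n` of `e^{iπ(O⃗_g + I⃗_f)·y⃗}` factors
coordinatewise into `∏ᵢ (1 + (-1)^(O_gᵢ + I_fᵢ))`, which is `2^n` if `O⃗_g = I⃗_f` and `0`
otherwise. The composite is therefore `s_f s_g ∑ e^{2iπ(P_f + P_g)} [I⃗_f = O⃗_g] |O⃗_f⟩⟨I⃗_g|`,
and so is the matrix product: contracting the middle index `b` of `[I⃗_f = b] [O⃗_g = b]`
yields the same Kronecker delta.
-/

noncomputable section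

/-- `e2pi x = e^{2iπx}`. -/
def e2pi (x : ℝ) : ℂ := Complex.exp (2 * (Real.pi : ℂ) * Complex.I * (x : ℂ))

/-- Integer dot product of two Boolean vectors, as a real number. -/
def dotR {n : ℕ} (a y : Fin n → Bool) : ℝ :=
  ∑ i, (if a i then (1 : ℝ) else 0) * (if y i then 1 else 0)

lemma e2pi_add (x y : ℝ) : e2pi (x + y) = e2pi x * e2pi y := by
  simp [e2pi, mul_add, Complex.exp_add]

lemma e2pi_sum {ι : Type*} (s : Finset ι) (f : ι → ℝ) :
    e2pi (∑ i ∈ s, f i) = ∏ i ∈ s, e2pi (f i) := by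
  simp [e2pi, Finset.mul_sum, Complex.exp_sum]

lemma e2pi_zero : e2pi 0 = 1 := by simp [e2pi]

lemma e2pi_one : e2pi 1 = 1 := by simp [e2pi]

lemma e2pi_half : e2pi (1 / 2) = -1 := by
  rw [e2pi, ← Complex.exp_pi_mul_I]
  congr 1
  push_cast
  ring

lemma sum_bool_e2pi_boole_mul_boole (a b : Bool) :
    ∑ v : Bool, e2pi (((if a then 1 else 0) + (if b then 1 else 0)) * (if v then 1 else 0) / 2)
      = if a = b then 2 else 0 := by
  cases a <;> cases b <;> norm_num [Fintype.sum_bool, e2pi_zero, e2pi_one, e2pi_half]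

lemma sum_e2pi_dotR_add_dotR_div_two {n : ℕ} (a b : Fin n → Bool) :
    ∑ y : Fin n → Bool, e2pi ((dotR a y + dotR b y) / 2) = if a = b then 2 ^ n else 0 := by
  have hsplit : ∀ y : Fin n → Bool, e2pi ((dotR a y + dotR b y) / 2) =
      ∏ i, e2pi (((if a i then 1 else 0) + (if b i then 1 else 0)) * (if y i then 1 else 0) / 2) := by
    intro y
    rw [dotR, dotR, ← Finset.sum_add_distrib, Finset.sum_div, e2pi_sum]
    simp only [add_mul]
  calc ∑ y : Fin n → Bool, e2pi ((dotR a y + dotR b y) / 2)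
      = ∏ i, ∑ v : Bool,
          e2pi (((if a i then 1 else 0) + (if b i then 1 else 0)) * (if v then 1 else 0) / 2) := by
        simp only [hsplit, Fintype.prod_sum]
    _ = ∏ i, if a i = b i then (2 : ℂ) else 0 := by
        simp only [sum_bool_e2pi_boole_mul_boole]
    _ = if a = b then 2 ^ n else 0 := by
        simp [Finset.prod_ite_zero, funext_iff]

lemma of_sum_boole_mul_of_sum_boole {α β μ ν π R : Type*} [Fintype α] [Fintype β] [Fintype ν]
    [DecidableEq μ] [DecidableEq ν] [DecidableEq π] [CommSemiring R] (s t : R)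
    (w : α → R) (w' : β → R) (O : α → μ) (I : α → ν) (O' : β → ν) (I' : β → π) :
    (Matrix.of fun a b => s * ∑ x, w x * (if O x = a then 1 else 0) * (if I x = b then 1 else 0))
      * (Matrix.of fun b c =>
          t * ∑ y, w' y * (if O' y = b then 1 else 0) * (if I' y = c then 1 else 0))
    = Matrix.of fun a c => s * t * ∑ x, ∑ y,
        w x * w' y * (if I x = O' y then 1 else 0)
          * (if O x = a then 1 else 0) * (if I' y = c then 1 else 0) := by
  ext a c
  simp only [Matrix.mul_apply, Matrix.of_apply, mul_mul_mul_comm s, ← Finset.mul_sum]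
  congr 1
  simp only [Finset.sum_mul_sum]
  rw [Finset.sum_comm]
  refine Finset.sum_congr rfl fun x _ => ?_
  rw [Finset.sum_comm]
  refine Finset.sum_congr rfl fun y _ => ?_
  have hsplit : ∀ b, (w x * (if O x = a then 1 else 0) * (if I x = b then 1 else 0)) *
      (w' y * (if O' y = b then 1 else 0) * (if I' y = c then 1 else 0))
        = w x * w' y * (if O x = a then 1 else 0) * (if I' y = c then 1 else 0)
          * ((if O' y = b then 1 else 0) * (if I x = b then 1 else 0)) := fun b => by ring
  rw [Finset.sum_congr rfl fun b _ => hsplit b, ← Finset.mul_sum]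
  simp only [boole_mul, Finset.sum_ite_eq, Finset.mem_univ, if_true]
  ring

/-- The sum-over-paths formula for composition is sound: the matrix of the composite
term `(s_f s_g/2^n)·∑ e^{2iπ(P_g + P_f + (O⃗_g·y⃗ + I⃗_f·y⃗)/2)} |O⃗_f⟩⟨I⃗_g|` equals the
product of the matrices of `f` and `g`. -/
theorem stmt_13 (kf kg m n p : ℕ) (sf sg : ℂ)
    (Pf : (Fin kf → Bool) → ℝ) (Pg : (Fin kg → Bool) → ℝ)
    (Of : (Fin kf → Bool) → (Fin m → Bool)) (If : (Fin kf → Bool) → (Fin n → Bool))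
    (Og : (Fin kg → Bool) → (Fin n → Bool)) (Ig : (Fin kg → Bool) → (Fin p → Bool)) :
    (Matrix.of fun (a : Fin m → Bool) (c : Fin p → Bool) =>
      (sf * sg / 2 ^ n) * ∑ yf : Fin kf → Bool, ∑ yg : Fin kg → Bool,
        ∑ y : Fin n → Bool,
          e2pi (Pg yg + Pf yf + (dotR (Og yg) y + dotR (If yf) y) / 2)
            * (if Of yf = a then 1 else 0) * (if Ig yg = c then 1 else 0))
    = (Matrix.of fun (a : Fin m → Bool) (b : Fin n → Bool) =>
        sf * ∑ yf : Fin kf → Bool,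
          e2pi (Pf yf) * (if Of yf = a then 1 else 0) * (if If yf = b then 1 else 0))
      * (Matrix.of fun (b : Fin n → Bool) (c : Fin p → Bool) =>
        sg * ∑ yg : Fin kg → Bool,
          e2pi (Pg yg) * (if Og yg = b then 1 else 0) * (if Ig yg = c then 1 else 0)) := by
  rw [of_sum_boole_mul_of_sum_boole]
  have hpaths : ∀ yf yg, ∑ y : Fin n → Bool,
      e2pi (Pg yg + Pf yf + (dotR (Og yg) y + dotR (If yf) y) / 2)
        = 2 ^ n * (e2pi (Pf yf) * e2pi (Pg yg) * if If yf = Og yg then 1 else 0) := by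
    intro yf yg
    simp only [e2pi_add _ ((_ + _) / 2), ← Finset.mul_sum, sum_e2pi_dotR_add_dotR_div_two,
      eq_comm (a := Og yg), e2pi_add]
    split_ifs <;> ring
  ext a c
  simp only [Matrix.of_apply, ← Finset.sum_mul, hpaths, mul_assoc, ← Finset.mul_sum]
  field_simp
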